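/- Let V be a pseudovariety of semigroups closed under two-sided Karnofsky–Rhodes expansion, and let (S_i)_{i∈I} be a nonempty family of pro-V semigroups each of which is a KR-cover. Then the V-coproduct ∐^V_{i∈I} S_i is a KR-cover. -/

import Mathlib

set_option autoImplicit false

/-! ### General notions: topological semigroups, pseudovarieties, pro-V semigroups -/

/-- Continuity of a map into a type regarded with the discrete topology. -/
def ContinuousDisc {S : Type} [TopologicalSpace S] {T : Type} (f : S → T) : Prop :=
  @Continuous S T _ ⊥ f

/-- A pseudovariety of semigroups: a class of finite semigroups closed under
homomorphic images, subsemigroups and finite direct products. -/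
structure Pseudovariety : Type 1 where
  Mem : ∀ (S : Type) [Semigroup S], Prop
  finite : ∀ (S : Type) [Semigroup S], Mem S → Finite S
  closed_hom : ∀ (S T : Type) [Semigroup S] [Semigroup T] (f : S →ₙ* T),
    Mem S → Function.Surjective f → Mem T
  closed_sub : ∀ (S T : Type) [Semigroup S] [Semigroup T] (f : T →ₙ* S),
    Mem S → Function.Injective f → Mem T
  closed_prod : ∀ (ι : Type) [Finite ι] (S : ι → Type) [∀ i, Semigroup (S i)],
    (∀ i, Mem (S i)) → Mem (∀ i, S i)

/-- A bundled member of a pseudovariety `V` (a finite semigroup belonging to `V`),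
always regarded as carrying the discrete topology. -/
structure SgrIn (V : Pseudovariety) : Type 1 where
  carrier : Type
  [str : Semigroup carrier]
  mem : V.Mem carrier

attribute [instance] SgrIn.str

/-- A (bundled) topological semigroup. -/
structure TopSgr : Type 1 where
  carrier : Type
  [str : Semigroup carrier]
  [top : TopologicalSpace carrier]

attribute [instance] TopSgr.str TopSgr.top

/-- A finite semigroup regarded as a topological semigroup with the discrete topology. -/
def discTopSgr (S : Type) [Semigroup S] : TopSgr :=
  @TopSgr.mk S _ ⊥

/-- A pro-V semigroup: a compact Hausdorff topological semigroup that is residually `V`. -/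
def IsProV (V : Pseudovariety) (S : TopSgr) : Prop :=
  CompactSpace S.carrier ∧ T2Space S.carrier ∧ ContinuousMul S.carrier ∧
    ∀ x y : S.carrier, x ≠ y → ∃ (F : SgrIn V) (f : S.carrier →ₙ* F.carrier),
      ContinuousDisc ⇑f ∧ f x ≠ f y

/-- A profinite semigroup: a compact Hausdorff totally disconnected topological semigroup. -/
def IsProfiniteSgr (S : TopSgr) : Prop :=
  CompactSpace S.carrier ∧ T2Space S.carrier ∧ TotallyDisconnectedSpace S.carrier ∧
    ContinuousMul S.carrier

/-- `C`, together with the continuous homomorphisms `φ i`, is a `V`-coproduct of the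
family `S` of pro-`V` semigroups. -/
structure IsCoproduct (V : Pseudovariety) {I : Type} (S : I → TopSgr)
    (C : TopSgr) (φ : ∀ i, (S i).carrier →ₙ* C.carrier) : Prop where
  proV : IsProV V C
  cont : ∀ i, Continuous ⇑(φ i)
  universal : ∀ (T : TopSgr), IsProV V T →
    ∀ ψ : ∀ i, (S i).carrier →ₙ* T.carrier, (∀ i, Continuous ⇑(ψ i)) →
      ∃! Ψ : C.carrier →ₙ* T.carrier, Continuous ⇑Ψ ∧ ∀ i, Ψ.comp (φ i) = ψ i

/-- `P`, together with the homomorphisms `e i`, is a free product (coproduct in the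
category of semigroups) of the family `S`. -/
structure IsFreeProduct {I : Type} (S : I → Type) [∀ i, Semigroup (S i)]
    (P : Type) [Semigroup P] (e : ∀ i, S i →ₙ* P) : Prop where
  universal : ∀ (T : Type) [Semigroup T] (f : ∀ i, S i →ₙ* T),
    ∃! F : P →ₙ* T, ∀ i, F.comp (e i) = f i

/-! ### Particular pseudovarieties and related notions -/

/-- `V` contains the pseudovariety `Sl` of finite semilattices. -/
def ContainsSl (V : Pseudovariety) : Prop :=
  ∀ (S : Type) [Semigroup S] [Finite S],
    (∀ x y : S, x * y = y * x) → (∀ x : S, x * x = x) → V.Mem S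

/-- Green's `J`-preorder: `s ≤_J t`, i.e. `s ∈ S^I t S^I`. -/
def JBelow {S : Type} [Semigroup S] (s t : S) : Prop :=
  ∃ x y : WithOne S, x * (t : WithOne S) * y = (s : WithOne S)

/-- `V` contains the pseudovariety `J` of finite `J`-trivial semigroups. -/
def ContainsJ (V : Pseudovariety) : Prop :=
  ∀ (S : Type) [Semigroup S] [Finite S],
    (∀ s t : S, JBelow s t → JBelow t s → s = t) → V.Mem S

/-- The preimage of an idempotent under a semigroup homomorphism, as a subsemigroup. -/
def fiberSub {S T : Type} [Semigroup S] [Semigroup T] (ψ : S →ₙ* T) (e : T)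
    (he : e * e = e) : Subsemigroup S where
  carrier := ⇑ψ ⁻¹' {e}
  mul_mem' := by
    intro a b ha hb
    simp only [Set.mem_preimage, Set.mem_singleton_iff] at *
    rw [map_mul, ha, hb, he]

/-- The set of products of `n+1` elements of a semigroup (so `nthProds S 0 = S`). -/
def nthProds (S : Type) [Semigroup S] : ℕ → Set S
  | 0 => Set.univ
  | n + 1 => {x | ∃ a y, y ∈ nthProds S n ∧ x = a * y}

/-- A nilpotent semigroup: it has a zero `z` and some power of the semigroup is `{z}`. -/
def IsNilpotentSgr (S : Type) [Semigroup S] : Prop :=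
  ∃ z : S, (∀ x : S, z * x = z ∧ x * z = z) ∧ ∃ n : ℕ, nthProds S n ⊆ {z}

/-- A generator of the Mal'cev product `N ⓜ V`: a finite semigroup admitting a surjective
homomorphism onto a member of `V` all of whose idempotent fibers are nilpotent. -/
def NMalcevGen (V : Pseudovariety) (S : Type) [Semigroup S] : Prop :=
  Finite S ∧ ∃ (T : SgrIn V) (ψ : S →ₙ* T.carrier), Function.Surjective ψ ∧
    ∀ (e : T.carrier) (he : e * e = e), IsNilpotentSgr (fiberSub ψ e he)

/-- The equality `N ⓜ V = V`: `V` coincides with the smallest pseudovariety containing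
all finite semigroups admitting an `N`-morphism onto some member of `V`. -/
def NMalcevFixed (V : Pseudovariety) : Prop :=
  ∀ (S : Type) [Semigroup S] [Finite S],
    V.Mem S ↔ ∀ U : Pseudovariety,
      (∀ (S' : Type) [Semigroup S'], NMalcevGen V S' → U.Mem S') → U.Mem S

/-- A completely simple semigroup: simple with a primitive idempotent. -/
def IsCompletelySimple (S : Type) [Semigroup S] : Prop :=
  (∀ J : Set S, J.Nonempty → (∀ s x : S, x ∈ J → s * x ∈ J ∧ x * s ∈ J) → J = Set.univ) ∧
  ∃ e : S, e * e = e ∧ ∀ f : S, f * f = f → e * f = f → f * e = f → f = e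

/-- An equidivisible semigroup. -/
def Equidivisible (S : Type) [Semigroup S] : Prop :=
  ∀ u v x y : S, u * v = x * y →
    ∃ t : WithOne S,
      ((x : WithOne S) = (u : WithOne S) * t ∧ t * (y : WithOne S) = (v : WithOne S)) ∨
      ((x : WithOne S) * t = (u : WithOne S) ∧ (y : WithOne S) = t * (v : WithOne S))

/-! ### The two-sided Karnofsky–Rhodes expansion -/

/-- Vertices of the two-sided Cayley graph of `T`: pairs of elements of `T^I`. -/
abbrev KRVtx (T : Type) : Type := WithOne T × WithOne T

/-- Edges of the two-sided Cayley graph: (source, label, target). -/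
abbrev KREdge (A T : Type) : Type := KRVtx T × A × KRVtx T

/-- The image in `T^I` of a letter. -/
def letterImg {A T : Type} [Semigroup T] (ψ : FreeSemigroup A →ₙ* T) (a : A) : WithOne T :=
  (ψ (FreeSemigroup.of a) : WithOne T)

/-- The image in `T^I` of a (possibly empty) word. -/
def wordImg {A T : Type} [Semigroup T] (ψ : FreeSemigroup A →ₙ* T) (w : List A) : WithOne T :=
  (w.map (letterImg ψ)).prod

/-- `e` is an edge of the two-sided Cayley graph `Γ_ψ`. -/
def IsKREdge {A T : Type} [Semigroup T] (ψ : FreeSemigroup A →ₙ* T) (e : KREdge A T) : Prop :=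
  e.1.1 * letterImg ψ e.2.1 = e.2.2.1 ∧ e.1.2 = letterImg ψ e.2.1 * e.2.2.2

/-- One step along an edge of `Γ_ψ` (used to define directed paths). -/
def KRStep {A T : Type} [Semigroup T] (ψ : FreeSemigroup A →ₙ* T) (v w : KRVtx T) : Prop :=
  ∃ a : A, v.1 * letterImg ψ a = w.1 ∧ v.2 = letterImg ψ a * w.2

/-- A transition edge of `Γ_ψ`: an edge from whose target there is no directed path
back to its source. -/
def IsTransEdge {A T : Type} [Semigroup T] (ψ : FreeSemigroup A →ₙ* T) (e : KREdge A T) : Prop :=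
  IsKREdge ψ e ∧ ¬ Relation.ReflTransGen (KRStep ψ) e.2.2 e.1

/-- The list of letters of an element of the free semigroup. -/
def letters {A : Type} (u : FreeSemigroup A) : List A := u.head :: u.tail

/-- The set of edges of the path `p_u` of `Γ_ψ` from `(I, ψ u)` to `(ψ u, I)` labeled by `u`. -/
def pathEdges {A T : Type} [Semigroup T] (ψ : FreeSemigroup A →ₙ* T) (u : FreeSemigroup A) :
    Set (KREdge A T) :=
  {e | ∃ (w₁ w₂ : List A) (a : A), letters u = w₁ ++ a :: w₂ ∧
    e = ((wordImg ψ w₁, wordImg ψ (a :: w₂)), a, (wordImg ψ (w₁ ++ [a]), wordImg ψ w₂))}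

/-- The set `T(p_u)` of transition edges of `Γ_ψ` occurring in the path `p_u`. -/
def transEdges {A T : Type} [Semigroup T] (ψ : FreeSemigroup A →ₙ* T) (u : FreeSemigroup A) :
    Set (KREdge A T) :=
  {e ∈ pathEdges ψ u | IsTransEdge ψ e}

/-- A realization of the two-sided Karnofsky–Rhodes expansion of `ψ : A⁺ → T`:
a semigroup `K = T_ψ^KR` together with the projection `ψ^KR : A⁺ → K`, which is onto and
identifies `u` and `v` exactly when `ψ u = ψ v` and `T(p_u) = T(p_v)`, and the canonical
homomorphism `π : T_ψ^KR → T` with `π ∘ ψ^KR = ψ`. -/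
structure KRExp {A T : Type} [Semigroup T] (ψ : FreeSemigroup A →ₙ* T) : Type 1 where
  K : Type
  [strK : Semigroup K]
  [finK : Finite K]
  ψKR : FreeSemigroup A →ₙ* K
  π : K →ₙ* T
  surj : Function.Surjective ⇑ψKR
  ker : ∀ u v : FreeSemigroup A, ψKR u = ψKR v ↔
    (ψ u = ψ v ∧ transEdges ψ u = transEdges ψ v)
  proj : π.comp ψKR = ψ

attribute [instance] KRExp.strK KRExp.finK

/-- The data of a two-sided Karnofsky–Rhodes expansion of a finite semigroup `T`:
a finite alphabet `A`, an onto homomorphism `ψ : A⁺ → T`, and a realization `T_ψ^KR`. -/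
structure KRData (T : Type) [Semigroup T] : Type 1 where
  A : Type
  [finA : Finite A]
  ψ : FreeSemigroup A →ₙ* T
  surjψ : Function.Surjective ⇑ψ
  E : KRExp ψ

attribute [instance] KRData.finA

/-- `V` is closed under two-sided Karnofsky–Rhodes expansion. -/
def ClosedUnderKR (V : Pseudovariety) : Prop :=
  ∀ (A T : Type) [Finite A] [Semigroup T], V.Mem T →
    ∀ (ψ : FreeSemigroup A →ₙ* T), Function.Surjective ⇑ψ →
      ∀ E : KRExp ψ, V.Mem E.K

/-! ### KR-covers -/

/-- `S` is a KR-cover of the finite semigroup `T`. -/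
def IsKRCoverOf (S : TopSgr) (T : Type) [Semigroup T] [Finite T] : Prop :=
  (∃ φ : S.carrier →ₙ* T, ContinuousDisc ⇑φ ∧ Function.Surjective ⇑φ) ∧
  ∀ φ : S.carrier →ₙ* T, ContinuousDisc ⇑φ → Function.Surjective ⇑φ →
    ∃ (D : KRData T) (φψ : S.carrier →ₙ* D.E.K),
      ContinuousDisc ⇑φψ ∧ D.E.π.comp φψ = φ

/-- `S` is a KR-cover: a KR-cover of each of its finite continuous homomorphic images. -/
def IsKRCover (S : TopSgr) : Prop :=
  ∀ (T : Type) [Semigroup T] [Finite T],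
    (∃ φ : S.carrier →ₙ* T, ContinuousDisc ⇑φ ∧ Function.Surjective ⇑φ) →
    IsKRCoverOf S T

/-- `S` is `V`-projective. -/
def IsVProjective (V : Pseudovariety) (S : TopSgr) : Prop :=
  IsProV V S ∧ ∀ (T R : TopSgr), IsProV V T → IsProV V R →
    ∀ (f : S.carrier →ₙ* T.carrier) (g : R.carrier →ₙ* T.carrier),
      Continuous ⇑f → Continuous ⇑g → Function.Surjective ⇑g →
        ∃ f' : S.carrier →ₙ* R.carrier, Continuous ⇑f' ∧ g.comp f' = f

/-! ### Strong KR-covers and letter super-cancellativity -/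

/-- `κ : A → S` is a generating mapping: its image generates a dense subsemigroup. -/
def GeneratingMap {A : Type} (S : TopSgr) (κ : A → S.carrier) : Prop :=
  Dense (Subsemigroup.closure (Set.range κ) : Set S.carrier)

/-- The homomorphism `A⁺ → T` extending `a ↦ φ (κ a)`. -/
def liftGen {A : Type} (S : TopSgr) (κ : A → S.carrier) {T : Type} [Semigroup T]
    (φ : S.carrier →ₙ* T) : FreeSemigroup A →ₙ* T :=
  FreeSemigroup.lift (fun a => φ (κ a))

/-- `S` is a strong KR-cover of the finite semigroup `T` with respect to the
generating mapping `κ`. -/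
def IsStrongKRCoverOfWrt {A : Type} (S : TopSgr) (κ : A → S.carrier)
    (T : Type) [Semigroup T] [Finite T] : Prop :=
  ∀ φ : S.carrier →ₙ* T, ContinuousDisc ⇑φ → Function.Surjective ⇑φ →
    ∃ (E : KRExp (liftGen S κ φ)) (φκ : S.carrier →ₙ* E.K),
      ContinuousDisc ⇑φκ ∧ E.π.comp φκ = φ ∧
      ∀ a : A, φκ (κ a) = E.ψKR (FreeSemigroup.of a)

/-- `S` is a strong KR-cover of the finite semigroup `T` (with respect to some
generating mapping with finite domain). -/
def IsStrongKRCoverOf (S : TopSgr) (T : Type) [Semigroup T] [Finite T] : Prop :=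
  ∃ A : Type, Finite A ∧ ∃ κ : A → S.carrier, GeneratingMap S κ ∧
    IsStrongKRCoverOfWrt S κ T

/-- `S` is a strong KR-cover: a strong KR-cover of each of its finite continuous
homomorphic images. -/
def IsStrongKRCover (S : TopSgr) : Prop :=
  ∀ (T : Type) [Semigroup T] [Finite T],
    (∃ φ : S.carrier →ₙ* T, ContinuousDisc ⇑φ ∧ Function.Surjective ⇑φ) →
    IsStrongKRCoverOf S T

/-- `S` is letter super-cancellative with respect to the subset `A` of `S`. -/
def IsLSC (S : TopSgr) (A : Set S.carrier) : Prop :=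
  ∀ a ∈ A, ∀ b ∈ A, ∀ u v : WithOne S.carrier,
    (u * (a : WithOne S.carrier) = v * (b : WithOne S.carrier) → a = b ∧ u = v) ∧
    ((a : WithOne S.carrier) * u = (b : WithOne S.carrier) * v → a = b ∧ u = v)

/-! ### `S^I` and inverse limits -/

/-- The sum topology on `S^I = S ∪ {I}`: the point `I` is isolated and `S` keeps
its topology. -/
def withOneTopology (S : Type) [TopologicalSpace S] : TopologicalSpace (WithOne S) where
  IsOpen V := IsOpen ((fun s : S => (s : WithOne S)) ⁻¹' V)
  isOpen_univ := by simp
  isOpen_inter := by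
    intro U V hU hV
    rw [Set.preimage_inter]
    exact hU.inter hV
  isOpen_sUnion := by
    intro s hs
    rw [Set.preimage_sUnion]
    exact isOpen_biUnion hs

/-- `S^I` as a topological semigroup (in fact a monoid): `S` with an isolated identity
adjoined. -/
def withOneTopSgr (S : TopSgr) : TopSgr :=
  @TopSgr.mk (WithOne S.carrier) _ (withOneTopology S.carrier)

/-- The inverse limit of a family of topological semigroups, as a subsemigroup of
the product. -/
def invLimSub {I : Type} [Preorder I] (S : I → TopSgr)
    (f : ∀ i j, j ≤ i → ((S i).carrier →ₙ* (S j).carrier)) :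
    Subsemigroup (∀ i, (S i).carrier) where
  carrier := {x | ∀ i j (h : j ≤ i), f i j h (x i) = x j}
  mul_mem' := by
    intro a b ha hb i j h
    simp only [Pi.mul_apply, map_mul, ha i j h, hb i j h]

/-- The inverse limit as a topological semigroup (with the topology induced from the
product topology). -/
def invLimTopSgr {I : Type} [Preorder I] (S : I → TopSgr)
    (f : ∀ i j, j ≤ i → ((S i).carrier →ₙ* (S j).carrier)) : TopSgr :=
  TopSgr.mk (invLimSub S f)

/-! A continuous onto map `φ₀ : C → T` forces `T ∈ V`, hence also the Karnofsky–Rhodes expansion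
`T^KR` of the canonical presentation `T⁺ → T`. Each restriction `φ₀ ∘ φᵢ` lifts to a KR expansion
of its image since `Sᵢ` is a KR-cover, and then on to `T^KR`, because the expansion is functorial
in the presentation: a map of Cayley graphs sends paths to paths, so an edge whose image is a
transition edge is itself one. The universal property of the coproduct assembles these lifts into
a map `C → T^KR`, whose projection to `T` is `φ₀` by uniqueness. -/

open FreeSemigroup

theorem List.append_eq_append_cons_iff {α : Type*} {l l' w₁ w₂ : List α} {a : α} :
    l ++ l' = w₁ ++ a :: w₂ ↔
      (∃ c, l = w₁ ++ a :: c ∧ w₂ = c ++ l') ∨ ∃ c, w₁ = l ++ c ∧ l' = c ++ a :: w₂ := by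
  rw [List.append_eq_append_iff]
  constructor
  · rintro (h | ⟨_ | ⟨b, c⟩, rfl, h⟩)
    · exact Or.inr h
    · exact Or.inr ⟨[], by simpa using h.symm⟩
    · obtain ⟨rfl, rfl⟩ := List.cons.inj h
      exact Or.inl ⟨c, rfl, rfl⟩
  · rintro (⟨c, rfl, rfl⟩ | h)
    · exact Or.inr ⟨a :: c, rfl, rfl⟩
    · exact Or.inl h

instance {X : Type*} [Finite X] : Finite (WithOne X) := inferInstanceAs (Finite (Option X))

theorem MulHom.exists_comp_eq_of_surjective {M N P : Type*} [Mul M] [Mul N] [Mul P]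
    {g : M →ₙ* N} (hg : Function.Surjective g) (h : M →ₙ* P)
    (hgh : ∀ x y, g x = g y → h x = h y) : ∃ k : N →ₙ* P, k.comp g = h := by
  refine ⟨⟨fun n => h (Function.surjInv hg n), fun n₁ n₂ => ?_⟩,
    MulHom.ext fun x => hgh _ _ (Function.surjInv_eq hg _)⟩
  rw [← map_mul]
  exact hgh _ _ (by rw [map_mul, Function.surjInv_eq hg, Function.surjInv_eq hg,
    Function.surjInv_eq hg])

section CayleyGraph

variable {A T : Type} [Semigroup T] (ψ : FreeSemigroup A →ₙ* T)

theorem wordImg_append (w₁ w₂ : List A) :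
    wordImg ψ (w₁ ++ w₂) = wordImg ψ w₁ * wordImg ψ w₂ := by
  simp [wordImg]

theorem wordImg_cons (a : A) (w : List A) :
    wordImg ψ (a :: w) = letterImg ψ a * wordImg ψ w := by
  simp [wordImg]

theorem letters_mul (u v : FreeSemigroup A) : letters (u * v) = letters u ++ letters v := by
  simp [letters, head_mul, tail_mul]

theorem letters_map {B : Type} (f : A → B) (u : FreeSemigroup A) :
    letters (map f u) = (letters u).map f := by
  induction u using FreeSemigroup.recOnMul with
  | ih1 a => rfl
  | ih2 u v hu hv => rw [map_mul, letters_mul, letters_mul, hu, hv, List.map_append]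

theorem wordImg_letters (u : FreeSemigroup A) : wordImg ψ (letters u) = ψ u := by
  induction u using FreeSemigroup.recOnMul with
  | ih1 a => simp [letters, wordImg, letterImg]
  | ih2 u v hu hv => rw [letters_mul, wordImg_append, hu, hv, map_mul, WithOne.coe_mul]

def splitEdge (w₁ : List A) (a : A) (w₂ : List A) : KREdge A T :=
  ((wordImg ψ w₁, wordImg ψ (a :: w₂)), a, (wordImg ψ (w₁ ++ [a]), wordImg ψ w₂))

def wordPathEdges (w : List A) : Set (KREdge A T) :=
  {e | ∃ (w₁ w₂ : List A) (a : A), w = w₁ ++ a :: w₂ ∧ e = splitEdge ψ w₁ a w₂}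

theorem pathEdges_eq_wordPathEdges (u : FreeSemigroup A) :
    pathEdges ψ u = wordPathEdges ψ (letters u) := rfl

theorem isKREdge_of_mem_wordPathEdges {w : List A} {e : KREdge A T}
    (he : e ∈ wordPathEdges ψ w) : IsKREdge ψ e := by
  obtain ⟨w₁, w₂, a, -, rfl⟩ := he
  exact ⟨by simp [splitEdge, wordImg], wordImg_cons ψ a w₂⟩

def mapEdge {A' T' : Type} (g : KRVtx T → KRVtx T') (f : A → A') (e : KREdge A T) :
    KREdge A' T' :=
  (g e.1, f e.2.1, g e.2.2)

def rightMulVtx (x : WithOne T) (v : KRVtx T) : KRVtx T := (v.1, v.2 * x)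

def leftMulVtx (x : WithOne T) (v : KRVtx T) : KRVtx T := (x * v.1, v.2)

theorem splitEdge_append_right (w₁ : List A) (a : A) (w₂ w : List A) :
    splitEdge ψ w₁ a (w₂ ++ w) = mapEdge (rightMulVtx (wordImg ψ w)) id (splitEdge ψ w₁ a w₂) := by
  simp [splitEdge, mapEdge, rightMulVtx, wordImg_append, wordImg_cons, mul_assoc]

theorem splitEdge_append_left (w w₁ : List A) (a : A) (w₂ : List A) :
    splitEdge ψ (w ++ w₁) a w₂ = mapEdge (leftMulVtx (wordImg ψ w)) id (splitEdge ψ w₁ a w₂) := by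
  simp [splitEdge, mapEdge, leftMulVtx, wordImg_append]

theorem wordPathEdges_append (w w' : List A) :
    wordPathEdges ψ (w ++ w') =
      mapEdge (rightMulVtx (wordImg ψ w')) id '' wordPathEdges ψ w ∪
        mapEdge (leftMulVtx (wordImg ψ w)) id '' wordPathEdges ψ w' := by
  ext e
  constructor
  · rintro ⟨w₁, w₂, a, hw, rfl⟩
    rcases List.append_eq_append_cons_iff.mp hw with ⟨c, rfl, rfl⟩ | ⟨c, rfl, rfl⟩
    · exact Or.inl ⟨_, ⟨w₁, c, a, rfl, rfl⟩, (splitEdge_append_right ψ w₁ a c w').symm⟩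
    · exact Or.inr ⟨_, ⟨c, w₂, a, rfl, rfl⟩, (splitEdge_append_left ψ w c a w₂).symm⟩
  · rintro (⟨_, ⟨w₁, w₂, a, rfl, rfl⟩, rfl⟩ | ⟨_, ⟨w₁, w₂, a, rfl, rfl⟩, rfl⟩)
    · exact ⟨w₁, w₂ ++ w', a, by simp, (splitEdge_append_right ψ w₁ a w₂ w').symm⟩
    · exact ⟨w ++ w₁, w₂, a, by simp, (splitEdge_append_left ψ w w₁ a w₂).symm⟩

theorem krStep_rightMulVtx (x : WithOne T) {v w : KRVtx T} (h : KRStep ψ v w) :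
    KRStep ψ (rightMulVtx x v) (rightMulVtx x w) := by
  obtain ⟨a, h₁, h₂⟩ := h
  exact ⟨a, h₁, by simp [rightMulVtx, h₂, mul_assoc]⟩

theorem krStep_leftMulVtx (x : WithOne T) {v w : KRVtx T} (h : KRStep ψ v w) :
    KRStep ψ (leftMulVtx x v) (leftMulVtx x w) := by
  obtain ⟨a, h₁, h₂⟩ := h
  exact ⟨a, by simp [leftMulVtx, ← h₁, mul_assoc], h₂⟩

variable {ψ} {A' T' : Type} [Semigroup T'] {ψ' : FreeSemigroup A' →ₙ* T'}

theorem isTransEdge_of_mapEdge {g : KRVtx T → KRVtx T'} {f : A → A'}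
    (hg : ∀ v w, KRStep ψ v w → KRStep ψ' (g v) (g w)) {e : KREdge A T} (he : IsKREdge ψ e)
    (h : IsTransEdge ψ' (mapEdge g f e)) : IsTransEdge ψ e :=
  ⟨he, fun hback => h.2 (Relation.ReflTransGen.lift g hg _ _ hback)⟩

theorem sep_isTransEdge_image {g : KRVtx T → KRVtx T'} (f : A → A')
    (hg : ∀ v w, KRStep ψ v w → KRStep ψ' (g v) (g w)) {P : Set (KREdge A T)}
    (hP : ∀ e ∈ P, IsKREdge ψ e) :
    {e ∈ mapEdge g f '' P | IsTransEdge ψ' e} =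
      {e ∈ mapEdge g f '' {e ∈ P | IsTransEdge ψ e} | IsTransEdge ψ' e} := by
  ext e
  constructor
  · rintro ⟨⟨e₀, he₀, rfl⟩, ht⟩
    exact ⟨⟨e₀, ⟨he₀, isTransEdge_of_mapEdge hg (hP e₀ he₀) ht⟩, rfl⟩, ht⟩
  · rintro ⟨⟨e₀, he₀, rfl⟩, ht⟩
    exact ⟨⟨e₀, he₀.1, rfl⟩, ht⟩

variable (ψ) in
theorem transEdges_mul (u v : FreeSemigroup A) :
    transEdges ψ (u * v) =
      {e ∈ mapEdge (rightMulVtx (ψ v)) id '' transEdges ψ u ∪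
        mapEdge (leftMulVtx (ψ u)) id '' transEdges ψ v | IsTransEdge ψ e} := by
  have hKR : ∀ w : List A, ∀ e ∈ wordPathEdges ψ w, IsKREdge ψ e :=
    fun _ _ he => isKREdge_of_mem_wordPathEdges ψ he
  rw [transEdges, pathEdges_eq_wordPathEdges, letters_mul, wordPathEdges_append,
    wordImg_letters, wordImg_letters]
  simp only [Set.mem_union, Set.sep_union]
  rw [sep_isTransEdge_image id (fun _ _ => krStep_rightMulVtx ψ _) (hKR _),
    sep_isTransEdge_image id (fun _ _ => krStep_leftMulVtx ψ _) (hKR _)]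
  rfl

end CayleyGraph

section CayleyGraphMap

variable {A T A' T' : Type} [Semigroup T] [Semigroup T'] {ψ : FreeSemigroup A →ₙ* T}
  {ψ' : FreeSemigroup A' →ₙ* T'} {ι : T' →ₙ* T} {f : A' → A}

def mapVtx (ι : T' →ₙ* T) (v : KRVtx T') : KRVtx T :=
  Prod.map (WithOne.mapMulHom ι) (WithOne.mapMulHom ι) v

theorem apply_map_eq (hf : ∀ a, ψ (of (f a)) = ι (ψ' (of a))) (u : FreeSemigroup A') :
    ψ (map f u) = ι (ψ' u) :=
  DFunLike.congr_fun (FreeSemigroup.hom_ext (f := ψ.comp (map f)) (g := ι.comp ψ') (funext hf)) u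

theorem letterImg_map (hf : ∀ a, ψ (of (f a)) = ι (ψ' (of a))) (a : A') :
    letterImg ψ (f a) = WithOne.mapMulHom ι (letterImg ψ' a) := by
  simp [letterImg, hf]

theorem wordImg_map (hf : ∀ a, ψ (of (f a)) = ι (ψ' (of a))) (w : List A') :
    wordImg ψ (w.map f) = WithOne.mapMulHom ι (wordImg ψ' w) := by
  simp only [wordImg, map_list_prod, List.map_map]
  exact congrArg List.prod (List.map_congr_left fun a _ => letterImg_map hf a)

theorem splitEdge_map (hf : ∀ a, ψ (of (f a)) = ι (ψ' (of a))) (w₁ : List A') (a : A')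
    (w₂ : List A') :
    splitEdge ψ (w₁.map f) (f a) (w₂.map f) = mapEdge (mapVtx ι) f (splitEdge ψ' w₁ a w₂) := by
  simp only [splitEdge, mapEdge, mapVtx, Prod.map, ← wordImg_map hf, List.map_cons,
    List.map_append, List.map_nil]

theorem wordPathEdges_map (hf : ∀ a, ψ (of (f a)) = ι (ψ' (of a))) (w : List A') :
    wordPathEdges ψ (w.map f) = mapEdge (mapVtx ι) f '' wordPathEdges ψ' w := by
  ext e
  constructor
  · rintro ⟨W₁, W₂, b, hw, rfl⟩
    obtain ⟨w₁, _ | ⟨a, w₂⟩, rfl, rfl, h⟩ := List.map_eq_append_iff.mp hw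
    · exact absurd h (List.cons_ne_nil b W₂).symm
    · obtain ⟨rfl, rfl⟩ := List.cons.inj h
      exact ⟨_, ⟨w₁, w₂, a, rfl, rfl⟩, (splitEdge_map hf w₁ a w₂).symm⟩
  · rintro ⟨_, ⟨w₁, w₂, a, rfl, rfl⟩, rfl⟩
    exact ⟨w₁.map f, w₂.map f, f a, by simp, (splitEdge_map hf w₁ a w₂).symm⟩

theorem krStep_mapVtx (hf : ∀ a, ψ (of (f a)) = ι (ψ' (of a))) {v w : KRVtx T'}
    (h : KRStep ψ' v w) : KRStep ψ (mapVtx ι v) (mapVtx ι w) := by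
  obtain ⟨a, h₁, h₂⟩ := h
  exact ⟨f a, by simp [mapVtx, letterImg_map hf, ← h₁], by simp [mapVtx, letterImg_map hf, h₂]⟩

theorem transEdges_map (hf : ∀ a, ψ (of (f a)) = ι (ψ' (of a))) (u : FreeSemigroup A') :
    transEdges ψ (map f u) = {e ∈ mapEdge (mapVtx ι) f '' transEdges ψ' u | IsTransEdge ψ e} := by
  rw [transEdges, pathEdges_eq_wordPathEdges, letters_map, wordPathEdges_map hf,
    sep_isTransEdge_image f (fun _ _ => krStep_mapVtx hf)
      (fun _ => isKREdge_of_mem_wordPathEdges ψ')]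
  rfl

end CayleyGraphMap

section KRExpansion

variable {A T : Type} [Semigroup T] (ψ : FreeSemigroup A →ₙ* T)

/-- The congruence `≡_ψ`. -/
def krCon : Con (FreeSemigroup A) where
  toSetoid := Setoid.ker fun u => (ψ u, transEdges ψ u)
  mul' {u₁ v₁ u₂ v₂} h₁ h₂ := by
    obtain ⟨hψ₁, hT₁⟩ : ψ u₁ = ψ v₁ ∧ transEdges ψ u₁ = transEdges ψ v₁ := Prod.ext_iff.mp h₁
    obtain ⟨hψ₂, hT₂⟩ : ψ u₂ = ψ v₂ ∧ transEdges ψ u₂ = transEdges ψ v₂ := Prod.ext_iff.mp h₂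
    show (ψ (u₁ * u₂), transEdges ψ (u₁ * u₂)) = (ψ (v₁ * v₂), transEdges ψ (v₁ * v₂))
    rw [map_mul, map_mul, transEdges_mul, transEdges_mul, hψ₁, hψ₂, hT₁, hT₂]

def krExp [Finite A] [Finite T] : KRExp ψ where
  K := (krCon ψ).Quotient
  finK := Finite.of_injective
    (fun q : (krCon ψ).Quotient => q.liftOn (fun u => (ψ u, transEdges ψ u)) fun _ _ h => h)
    (by rintro ⟨u⟩ ⟨v⟩ h; exact (krCon ψ).eq.2 h)
  ψKR := (krCon ψ).mkMulHom
  π := ⟨fun q => q.liftOn ψ fun _ _ h => congrArg Prod.fst h,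
    fun x y => Con.induction_on₂ x y (map_mul ψ)⟩
  surj := Quotient.mk_surjective
  ker _ _ := (krCon ψ).eq.trans Prod.ext_iff
  proj := rfl

end KRExpansion

theorem KRExp.exists_hom_of_map {A A' T T' : Type} [Semigroup T] [Semigroup T']
    {ψ : FreeSemigroup A →ₙ* T} {ψ' : FreeSemigroup A' →ₙ* T'} (ι : T' →ₙ* T) (f : A' → A)
    (hf : ∀ a, ψ (of (f a)) = ι (ψ' (of a))) (E : KRExp ψ) (E' : KRExp ψ') :
    ∃ η : E'.K →ₙ* E.K, E.π.comp η = ι.comp E'.π := by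
  obtain ⟨η, hη⟩ := MulHom.exists_comp_eq_of_surjective E'.surj (E.ψKR.comp (map f))
    fun u v huv => by
      rw [E'.ker] at huv
      rw [MulHom.comp_apply, MulHom.comp_apply, E.ker, apply_map_eq hf, apply_map_eq hf,
        transEdges_map hf, transEdges_map hf, huv.1, huv.2]
      exact ⟨rfl, rfl⟩
  refine ⟨η, (MulHom.cancel_right E'.surj).1 (MulHom.ext fun u => ?_)⟩
  calc E.π (η (E'.ψKR u)) = E.π (E.ψKR (map f u)) := congrArg E.π (DFunLike.congr_fun hη u)
    _ = ψ (map f u) := DFunLike.congr_fun E.proj _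
    _ = ι (ψ' u) := apply_map_eq hf u
    _ = ι (E'.π (E'.ψKR u)) := congrArg ι (DFunLike.congr_fun E'.proj u).symm

section ContinuousDisc

variable {S T : Type} [TopologicalSpace S] {f : S → T}

theorem ContinuousDisc.comp_continuous {R : Type} [TopologicalSpace R] {g : R → S}
    (hf : ContinuousDisc f) (hg : Continuous g) : ContinuousDisc (f ∘ g) :=
  @Continuous.comp _ _ _ _ _ ⊥ _ _ hf hg

theorem ContinuousDisc.comp {U : Type} (g : T → U) (hf : ContinuousDisc f) :
    ContinuousDisc (g ∘ f) :=
  @Continuous.comp _ _ _ _ ⊥ ⊥ _ _ continuous_bot hf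

theorem ContinuousDisc.of_comp_injective {U : Type} {g : S → U} {i : U → T}
    (hi : Function.Injective i) (h : ContinuousDisc (i ∘ g)) : ContinuousDisc g := by
  let : TopologicalSpace T := ⊥
  let : TopologicalSpace U := ⊥
  have : DiscreteTopology T := ⟨rfl⟩
  have : DiscreteTopology U := ⟨rfl⟩
  refine continuous_discrete_rng.2 fun u => ?_
  rw [← hi.preimage_image {u}, Set.image_singleton, ← Set.preimage_comp]
  exact continuous_discrete_rng.1 h (i u)

theorem ContinuousDisc.isOpen_preimage_prodMap (hf : ContinuousDisc f) (U : Set (T × T)) :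
    IsOpen ((fun p : S × S => (f p.1, f p.2)) ⁻¹' U) := by
  let : TopologicalSpace T := ⊥
  have : DiscreteTopology T := ⟨rfl⟩
  have hf' : Continuous f := hf
  exact (isOpen_discrete U).preimage ((hf'.comp continuous_fst).prodMk (hf'.comp continuous_snd))

end ContinuousDisc

section ProV

variable {V : Pseudovariety}

theorem isProV_discTopSgr {F : Type} [Semigroup F] (hF : V.Mem F) : IsProV V (discTopSgr F) := by
  have : Finite (discTopSgr F).carrier := V.finite F hF
  have : DiscreteTopology (discTopSgr F).carrier := ⟨rfl⟩
  exact ⟨Finite.compactSpace, inferInstance, inferInstance,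
    fun x y hxy => ⟨⟨F, hF⟩, MulHom.id F, continuous_bot, hxy⟩⟩

/-- Compactness of `{(x, y) | φ x ≠ φ y}` lets finitely many maps into `V` separate what `φ`
separates. -/
theorem IsProV.exists_hom_ker_le {C : TopSgr} (hC : IsProV V C) {T : Type} [Semigroup T]
    (φ : C.carrier →ₙ* T) (hφ : ContinuousDisc φ) :
    ∃ (F : SgrIn V) (g : C.carrier →ₙ* F.carrier), ∀ x y, g x = g y → φ x = φ y := by
  obtain ⟨hcomp, -, -, hsep⟩ := hC
  let D : Set (C.carrier × C.carrier) := {p | φ p.1 ≠ φ p.2}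
  have hD : IsCompact D := (hφ.isOpen_preimage_prodMap (Set.diagonal T)).isClosed_compl.isCompact
  have hsepD : ∀ p : D, ∃ (F : SgrIn V) (g : C.carrier →ₙ* F.carrier),
      ContinuousDisc g ∧ g p.1.1 ≠ g p.1.2 :=
    fun p => hsep _ _ fun h => p.2 (congrArg φ h)
  choose F g hg hne using hsepD
  obtain ⟨s, hs⟩ := hD.elim_finite_subcover (fun p => {q | g p q.1 ≠ g p q.2})
    (fun p => (hg p).isOpen_preimage_prodMap (Set.diagonal _)ᶜ)
    fun p hp => Set.mem_iUnion.2 ⟨⟨p, hp⟩, hne ⟨p, hp⟩⟩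
  refine ⟨⟨∀ p : s, (F p).carrier, V.closed_prod s _ fun p => (F p).mem⟩,
    MulHom.pi fun p => g p, fun x y hxy => ?_⟩
  by_contra hφxy
  obtain ⟨p, hp, hgxy⟩ := Set.mem_iUnion₂.1 (hs (show (x, y) ∈ D from hφxy))
  exact hgxy (congrFun hxy ⟨p, hp⟩)

theorem IsProV.mem_of_surjective {C : TopSgr} (hC : IsProV V C) {T : Type} [Semigroup T]
    (φ : C.carrier →ₙ* T) (hφ : ContinuousDisc φ) (hsurj : Function.Surjective φ) : V.Mem T := by
  obtain ⟨F, g, hker⟩ := hC.exists_hom_ker_le φ hφ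
  obtain ⟨k, rfl⟩ := MulHom.exists_comp_eq_of_surjective g.srangeRestrict_surjective φ
    fun x y h => hker x y (congrArg Subtype.val h)
  exact V.closed_hom _ T k
    (V.closed_sub _ _ (MulMemClass.subtype g.srange) F.mem Subtype.coe_injective)
    (hsurj.of_comp (f := k))

end ProV

theorem IsCoproduct.exists_lift {V : Pseudovariety} {I : Type} {S : I → TopSgr} {C : TopSgr}
    {φ : ∀ i, (S i).carrier →ₙ* C.carrier} (h : IsCoproduct V S C φ) {F T : Type}
    [Semigroup F] [Semigroup T] (hF : V.Mem F) (hT : V.Mem T) (p : F →ₙ* T)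
    (φ₀ : C.carrier →ₙ* T) (hφ₀ : ContinuousDisc φ₀)
    (hlift : ∀ i, ∃ l : (S i).carrier →ₙ* F, ContinuousDisc l ∧ p.comp l = φ₀.comp (φ i)) :
    ∃ Ψ : C.carrier →ₙ* F, ContinuousDisc Ψ ∧ p.comp Ψ = φ₀ := by
  choose l hlc hl using hlift
  obtain ⟨Ψ, ⟨hΨc, hΨ⟩, -⟩ := h.universal (discTopSgr F) (isProV_discTopSgr hF) l hlc
  obtain ⟨Φ, -, huniq⟩ := h.universal (discTopSgr T) (isProV_discTopSgr hT)
    (fun i => φ₀.comp (φ i)) fun i => hφ₀.comp_continuous (h.cont i)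
  refine ⟨Ψ, hΨc, (huniq (p.comp Ψ) ⟨ContinuousDisc.comp p hΨc, fun i => ?_⟩).trans
    (huniq φ₀ ⟨hφ₀, fun i => rfl⟩).symm⟩
  rw [← hl i, ← hΨ i]
  rfl

theorem IsKRCover.exists_lift {S : TopSgr} (hS : IsKRCover S) {T : Type} [Semigroup T] [Finite T]
    (E : KRExp (FreeSemigroup.lift id : FreeSemigroup T →ₙ* T)) (ρ : S.carrier →ₙ* T)
    (hρ : ContinuousDisc ρ) : ∃ l : S.carrier →ₙ* E.K, ContinuousDisc l ∧ E.π.comp l = ρ := by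
  have hρ' : ContinuousDisc ρ.srangeRestrict := hρ.of_comp_injective Subtype.coe_injective
  obtain ⟨D, l, hlc, hl⟩ := (hS ρ.srange ⟨_, hρ', ρ.srangeRestrict_surjective⟩).2 _ hρ'
    ρ.srangeRestrict_surjective
  obtain ⟨η, hη⟩ := KRExp.exists_hom_of_map (MulMemClass.subtype ρ.srange)
    (fun a => (D.ψ (of a) : T)) (fun _ => rfl) E D.E
  refine ⟨η.comp l, hlc.comp η, ?_⟩
  rw [← MulHom.comp_assoc, hη, MulHom.comp_assoc, hl]
  rfl

theorem coproduct_isKRCover_general (V : Pseudovariety) (hV : ClosedUnderKR V)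
    {I : Type} (S : I → TopSgr)
    (hcov : ∀ i, IsKRCover (S i))
    (C : TopSgr) (φ : ∀ i, (S i).carrier →ₙ* C.carrier) (h : IsCoproduct V S C φ) :
    IsKRCover C := by
  intro T _ _ hex
  refine ⟨hex, fun φ₀ hφ₀ hφ₀_surj => ?_⟩
  have hT : V.Mem T := h.proV.mem_of_surjective φ₀ hφ₀ hφ₀_surj
  let ψ : FreeSemigroup T →ₙ* T := FreeSemigroup.lift id
  have hψ : Function.Surjective ψ := fun t => ⟨of t, rfl⟩
  obtain ⟨Ψ, hΨ, hΨπ⟩ := h.exists_lift (hV T T hT ψ hψ (krExp ψ)) hT (krExp ψ).π φ₀ hφ₀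
    fun i => (hcov i).exists_lift (krExp ψ) _ (hφ₀.comp_continuous (h.cont i))
  exact ⟨⟨T, ψ, hψ, krExp ψ⟩, Ψ, hΨ, hΨπ⟩

/-- If `V` is closed under two-sided Karnofsky–Rhodes expansion, a
`V`-coproduct of pro-`V` KR-covers is a KR-cover. -/
theorem coproduct_isKRCover (V : Pseudovariety) (hV : ClosedUnderKR V)
    {I : Type} [Nonempty I] (S : I → TopSgr) (hS : ∀ i, IsProV V (S i))
    (hcov : ∀ i, IsKRCover (S i))
    (C : TopSgr) (φ : ∀ i, (S i).carrier →ₙ* C.carrier) (h : IsCoproduct V S C φ) :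
    IsKRCover C :=
  coproduct_isKRCover_general V hV S hcov C φ h
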